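/- arXiv:2508.16006 — 8 statements merged into one kernel-verified Lean document; each statement's English description precedes it below -/
import Mathlib

section
/- Let ℍ be a hypergraph on [n] and let A and B be acyclic orientations of ℍ. Then A ≤ B in the hypergraphic poset P_ℍ if and only if A(H) ≤ B(H) for every hyperedge H ∈ ℍ. -/
/-!
Increasing flips raise sources, so `A ≤ B` in `P_ℍ` forces `A H ≤ B H` for all `H`.
Conversely, let `A < B` pointwise. Pick a hyperedge `H₀` with `A H₀ ≠ B H₀` whose source
`i = A H₀` reaches no source of another disagreement in the digraph of `A`, and, among the
disagreements with `A`-source `i`, one whose `B`-source `j = B H₀` is reached in the digraph of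
`B` from no other of their `B`-sources. Moving the source of every hyperedge with source `i` that
contains `j` to `j` is an increasing flip; the extremal choices make it acyclic and keep it
below `B`. As there are finitely many orientations, iterating reaches `B`.
-/

/-- `ℍ` is a hypergraph on `[n]` (vertices modeled by `Fin n`):
it contains every singleton. -/
def IsHypergraph (n : ℕ) (ℍ : Finset (Finset (Fin n))) : Prop :=
  ∀ i : Fin n, ({i} : Finset (Fin n)) ∈ ℍ

/-- An orientation of `ℍ` assigns to each hyperedge `H ∈ ℍ` a source `A H ∈ H`. -/
def IsOrientation {n : ℕ} {ℍ : Finset (Finset (Fin n))}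
    (A : {H // H ∈ ℍ} → Fin n) : Prop :=
  ∀ H : {H // H ∈ ℍ}, A H ∈ H.1

/-- An orientation `A` is acyclic if there are no hyperedges `H_1, …, H_k ∈ ℍ` with
`k ≥ 2` such that `A (H_{t+1}) ∈ H_t \ {A (H_t)}` for all `t ∈ [k-1]` and
`A (H_1) ∈ H_k \ {A (H_k)}` (indexed from `0` below). -/
def IsAcyclic {n : ℕ} {ℍ : Finset (Finset (Fin n))}
    (A : {H // H ∈ ℍ} → Fin n) : Prop :=
  ¬ ∃ (k : ℕ) (Hs : ℕ → {H // H ∈ ℍ}), 2 ≤ k ∧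
      (∀ t, t + 1 < k → A (Hs (t + 1)) ∈ (Hs t).1 ∧ A (Hs (t + 1)) ≠ A (Hs t)) ∧
      A (Hs 0) ∈ (Hs (k - 1)).1 ∧ A (Hs 0) ≠ A (Hs (k - 1))

/-- The distinct orientations `A ≠ B` of `ℍ` are related by an increasing flip
between `i` and `j` (`i < j`): (a) if `A H ≠ B H` then `A H = i` and `B H = j`, and
(b) if `{i, j} ⊆ H` then `A H = i ↔ B H = j`. -/
def IsFlip {n : ℕ} {ℍ : Finset (Finset (Fin n))}
    (A B : {H // H ∈ ℍ} → Fin n) (i j : Fin n) : Prop :=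
  i < j ∧ A ≠ B ∧ ∀ H : {H // H ∈ ℍ},
    (A H ≠ B H → A H = i ∧ B H = j) ∧
    (i ∈ H.1 → j ∈ H.1 → (A H = i ↔ B H = j))

/-- `[h 0, …, h m]` is a path of length `m` in the orientation `A`:
for each `t < m` there is `H ∈ ℍ` with `A H = h t` and `h (t+1) ∈ H`. -/
def IsPath {n : ℕ} {ℍ : Finset (Finset (Fin n))}
    (A : {H // H ∈ ℍ} → Fin n) (m : ℕ) (h : ℕ → Fin n) : Prop :=
  ∀ t < m, ∃ H : {H // H ∈ ℍ}, A H = h t ∧ h (t + 1) ∈ H.1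

/-- One step in the hypergraphic poset: an increasing flip between acyclic
orientations of `ℍ`. -/
def FlipStep {n : ℕ} {ℍ : Finset (Finset (Fin n))}
    (A B : {H // H ∈ ℍ} → Fin n) : Prop :=
  IsOrientation A ∧ IsOrientation B ∧ IsAcyclic A ∧ IsAcyclic B ∧
    ∃ i j : Fin n, IsFlip A B i j

open Relation

namespace Relation

variable {α : Type*} {r : α → α → Prop}

theorem ReflTransGen.transGen_of_ne {a b : α} (h : ReflTransGen r a b) (hne : a ≠ b) :
    TransGen r a b :=
  (reflTransGen_iff_eq_or_transGen.mp h).resolve_left hne.symm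

/-- A path either never leaves `j`, or first reaches `j` along a path that never leaves `j`. -/
theorem transGen_avoid_or_first_hit (j : α) {a b : α} (h : TransGen r a b) :
    TransGen (fun u w => r u w ∧ u ≠ j) a b ∨
      ReflTransGen (fun u w => r u w ∧ u ≠ j) a j ∧ TransGen r j b := by
  induction h using TransGen.head_induction_on with
  | @single a e =>
    by_cases ha : a = j
    · exact .inr ⟨ha ▸ .refl, ha ▸ .single e⟩
    · exact .inl (.single ⟨e, ha⟩)
  | @head a c e h ih =>
    by_cases ha : a = j
    · exact .inr ⟨ha ▸ .refl, ha ▸ h.head e⟩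
    · rcases ih with h' | ⟨p, q⟩
      · exact .inl (h'.head ⟨e, ha⟩)
      · exact .inr ⟨p.head ⟨e, ha⟩, q⟩

theorem transGen_avoid_of_ne {a j : α} (h : TransGen r a j) (ha : a ≠ j) :
    TransGen (fun u w => r u w ∧ u ≠ j) a j := by
  rcases transGen_avoid_or_first_hit j h with h' | ⟨p, -⟩
  · exact h'
  · exact p.transGen_of_ne ha

theorem transGen_avoid_or_cycle (j : α) {a : α} (h : TransGen r a a) :
    TransGen (fun u w => r u w ∧ u ≠ j) a a ∨ TransGen r j j := by
  rcases transGen_avoid_or_first_hit j h with h' | ⟨p, q⟩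
  · exact .inl h'
  · exact .inr (q.trans_left (ReflTransGen.mono (fun _ _ e => e.1) _ _ p))

theorem exists_not_transGen_of_irrefl [Finite α] (hr : ∀ a, ¬ TransGen r a a) {S : Set α}
    (hS : S.Nonempty) : ∃ a ∈ S, ∀ b ∈ S, ¬ TransGen r b a := by
  have : Std.Irrefl (TransGen r) := ⟨hr⟩
  exact (Finite.wellFounded_of_trans_of_irrefl (TransGen r)).has_min S hS

end Relation

namespace HypergraphicPoset

variable {n : ℕ} {ℍ : Finset (Finset (Fin n))}

def OrientAdj (A : {H // H ∈ ℍ} → Fin n) (u v : Fin n) : Prop :=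
  ∃ H : {H // H ∈ ℍ}, A H = u ∧ v ∈ H.1 ∧ v ≠ u

def flipAt (A : {H // H ∈ ℍ} → Fin n) (i j : Fin n) (H : {H // H ∈ ℍ}) : Fin n :=
  if A H = i ∧ j ∈ H.1 then j else A H

variable {A B : {H // H ∈ ℍ} → Fin n}

theorem orientAdj_of_mem {H : {H // H ∈ ℍ}} {v : Fin n} (hv : v ∈ H.1) (hne : v ≠ A H) :
    OrientAdj A (A H) v :=
  ⟨H, rfl, hv, hne⟩

theorem OrientAdj.ne {u v : Fin n} (h : OrientAdj A u v) : v ≠ u :=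
  h.choose_spec.2.2

theorem exists_hyperedge_chain_of_transGen {a b : Fin n} (h : TransGen (OrientAdj A) a b) :
    ∃ (k : ℕ) (Hs : ℕ → {H // H ∈ ℍ}), A (Hs 0) = a ∧
      (∀ t < k, A (Hs (t + 1)) ∈ (Hs t).1 ∧ A (Hs (t + 1)) ≠ A (Hs t)) ∧
      b ∈ (Hs k).1 ∧ b ≠ A (Hs k) := by
  induction h with
  | single e =>
    obtain ⟨H, hH, hb, hba⟩ := e
    exact ⟨0, fun _ => H, hH, fun t ht => absurd ht t.not_lt_zero, hb, hH ▸ hba⟩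
  | @tail b c _ e ih =>
    obtain ⟨k, Hs, h0, hchain, hb, hbk⟩ := ih
    obtain ⟨K, hK, hc, hcb⟩ := e
    refine ⟨k + 1, Function.update Hs (k + 1) K, ?_, fun t ht => ?_, ?_, ?_⟩
    · rwa [Function.update_of_ne (by omega)]
    · rcases Nat.lt_succ_iff_lt_or_eq.mp ht with ht | rfl
      · rw [Function.update_of_ne (by omega), Function.update_of_ne (by omega)]
        exact hchain t ht
      · rw [Function.update_self, Function.update_of_ne (by omega), hK]
        exact ⟨hb, hbk⟩
    · rwa [Function.update_self]
    · rwa [Function.update_self, hK]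

theorem isAcyclic_iff_irrefl : IsAcyclic A ↔ ∀ v, ¬ TransGen (OrientAdj A) v v := by
  constructor
  · intro hA v hv
    obtain ⟨k, Hs, h0, hchain, hv, hvk⟩ := exists_hyperedge_chain_of_transGen hv
    rcases k.eq_zero_or_pos with rfl | hk
    · exact hvk h0.symm
    · exact hA ⟨k + 1, Hs, by omega, fun t ht => hchain t (by omega), by simpa [h0],
        by simpa [h0]⟩
  · rintro hA ⟨k, Hs, hk, hchain, hmem, hne⟩
    have hpath : ∀ t < k, ReflTransGen (OrientAdj A) (A (Hs 0)) (A (Hs t)) := by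
      intro t
      induction t with
      | zero => exact fun _ => .refl
      | succ t ih =>
        intro ht
        exact (ih (by omega)).tail (orientAdj_of_mem (hchain t ht).1 (hchain t ht).2)
    exact hA _ (.tail' (hpath (k - 1) (by omega)) (orientAdj_of_mem hmem hne))

theorem source_ne_of_orientAdj (hA : IsAcyclic A) {i j : Fin n} (hij : OrientAdj A i j)
    {H : {H // H ∈ ℍ}} (hi : i ∈ H.1) : A H ≠ j := by
  rw [isAcyclic_iff_irrefl] at hA
  intro hH
  exact hA i ((TransGen.single hij).tail ⟨H, hH, hi, hij.ne.symm⟩)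

theorem lt_of_isFlip {i j : Fin n} (h : IsFlip A B i j) : A < B := by
  obtain ⟨hij, hne, hflip⟩ := h
  refine lt_of_le_of_ne (fun H => ?_) hne
  by_cases hH : A H = B H
  · exact hH.le
  · obtain ⟨hA, hB⟩ := (hflip H).1 hH
    exact hA ▸ hB ▸ hij.le

theorem FlipStep.lt (h : FlipStep A B) : A < B :=
  have ⟨_, _, _, _, _, _, hflip⟩ := h
  lt_of_isFlip hflip

section flipAt

variable {i j : Fin n}

theorem flipAt_of_flipped {H : {H // H ∈ ℍ}} (hA : A H = i) (hj : j ∈ H.1) :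
    flipAt A i j H = j :=
  if_pos ⟨hA, hj⟩

theorem flipAt_of_not_flipped {H : {H // H ∈ ℍ}} (h : ¬ (A H = i ∧ j ∈ H.1)) :
    flipAt A i j H = A H :=
  if_neg h

theorem isOrientation_flipAt (hA : IsOrientation A) : IsOrientation (flipAt A i j) := by
  intro H
  by_cases hH : A H = i ∧ j ∈ H.1
  · rw [flipAt_of_flipped hH.1 hH.2]; exact hH.2
  · rw [flipAt_of_not_flipped hH]; exact hA H

theorem flipAt_le (hle : A ≤ B) (hB : ∀ H : {H // H ∈ ℍ}, A H = i → j ∈ H.1 → B H = j) :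
    flipAt A i j ≤ B := by
  intro H
  by_cases hH : A H = i ∧ j ∈ H.1
  · rw [flipAt_of_flipped hH.1 hH.2, hB H hH.1 hH.2]
  · rw [flipAt_of_not_flipped hH]; exact hle H

theorem isFlip_flipAt (hij : i < j) {H₀ : {H // H ∈ ℍ}} (hH₀ : A H₀ = i) (hjH₀ : j ∈ H₀.1)
    (hA : ∀ H : {H // H ∈ ℍ}, i ∈ H.1 → A H ≠ j) : IsFlip A (flipAt A i j) i j := by
  refine ⟨hij, fun h => hij.ne ?_, fun H => ⟨fun hne => ?_, fun hiH hjH => ⟨?_, fun hj => ?_⟩⟩⟩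
  · rw [← hH₀, h, flipAt_of_flipped hH₀ hjH₀]
  · by_cases hH : A H = i ∧ j ∈ H.1
    · exact ⟨hH.1, flipAt_of_flipped hH.1 hH.2⟩
    · exact absurd (flipAt_of_not_flipped hH).symm hne
  · exact fun hAi => flipAt_of_flipped hAi hjH
  · by_contra hAi
    exact hA H hiH (flipAt_of_not_flipped (fun hH => hAi hH.1) ▸ hj)

theorem orientAdj_of_orientAdj_flipAt {u w : Fin n} (h : OrientAdj (flipAt A i j) u w)
    (hu : u ≠ j) : OrientAdj A u w := by
  obtain ⟨H, hH, hw, hwu⟩ := h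
  by_cases hF : A H = i ∧ j ∈ H.1
  · exact absurd (hH ▸ flipAt_of_flipped hF.1 hF.2) hu
  · exact ⟨H, flipAt_of_not_flipped hF ▸ hH, hw, hwu⟩

theorem not_orientAdj_flipAt : ¬ OrientAdj (flipAt A i j) i j := by
  rintro ⟨H, hH, hj, hji⟩
  by_cases hF : A H = i ∧ j ∈ H.1
  · exact hji (hH ▸ flipAt_of_flipped hF.1 hF.2).symm
  · exact hF ⟨flipAt_of_not_flipped hF ▸ hH, hj⟩

theorem orientAdj_flipAt_from {v : Fin n} (h : OrientAdj (flipAt A i j) j v) :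
    OrientAdj A j v ∨ v = i ∨ OrientAdj A i v := by
  obtain ⟨H, hH, hv, hvj⟩ := h
  by_cases hF : A H = i ∧ j ∈ H.1
  · by_cases hvi : v = i
    · exact .inr (.inl hvi)
    · exact .inr (.inr ⟨H, hF.1, hv, hvi⟩)
  · exact .inl ⟨H, flipAt_of_not_flipped hF ▸ hH, hv, hvj⟩

/-- A cycle of the flipped orientation must leave `j`; its first return to `j` is then an
`A`-path, which together with the edge it started with gives an `A`-path `i → u →⁺ j`. -/
theorem isAcyclic_flipAt (hA : IsAcyclic A)
    (hdetour : ∀ u, OrientAdj A i u → ¬ TransGen (OrientAdj A) u j) :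
    IsAcyclic (flipAt A i j) := by
  rw [isAcyclic_iff_irrefl] at hA ⊢
  have hsub : (fun u w => OrientAdj (flipAt A i j) u w ∧ u ≠ j) ≤ OrientAdj A :=
    fun _ _ e => orientAdj_of_orientAdj_flipAt e.1 e.2
  intro v hv
  rcases transGen_avoid_or_cycle j hv with hv' | hj
  · exact hA v (TransGen.mono hsub _ _ hv')
  obtain ⟨v, hjv, hvj⟩ := TransGen.head'_iff.mp hj
  have hvj' := transGen_avoid_of_ne (hvj.transGen_of_ne hjv.ne) hjv.ne
  rcases orientAdj_flipAt_from hjv with hjv | rfl | hiv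
  · exact hA j ((TransGen.mono hsub _ _ hvj').head hjv)
  · obtain ⟨c, hic, hcj⟩ := TransGen.head'_iff.mp hvj'
    have hcj' : c ≠ j := fun hc => not_orientAdj_flipAt (hc ▸ hic.1)
    exact hdetour c (hsub _ _ hic) (TransGen.mono hsub _ _ (hcj.transGen_of_ne hcj'))
  · exact hdetour v hiv (TransGen.mono hsub _ _ hvj')

end flipAt

/-- `H₀` selects the flip from `A H₀` to `B H₀` performed on the way from `A` up to `B`. -/
structure IsExtremalDisagreement (A B : {H // H ∈ ℍ} → Fin n) (H₀ : {H // H ∈ ℍ}) : Prop where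
  ne : A H₀ ≠ B H₀
  agree_of_reach : ∀ H, TransGen (OrientAdj A) (A H₀) (A H) → A H = B H
  not_reach_of_disagree :
    ∀ H, A H = A H₀ → A H ≠ B H → ¬ TransGen (OrientAdj B) (B H) (B H₀)

theorem exists_isExtremalDisagreement (hA : IsAcyclic A) (hB : IsAcyclic B) (hne : A ≠ B) :
    ∃ H₀, IsExtremalDisagreement A B H₀ := by
  rw [isAcyclic_iff_irrefl] at hA hB
  obtain ⟨H₁, hH₁⟩ := Function.ne_iff.mp hne
  obtain ⟨-, ⟨H₂, hH₂, rfl⟩, hmax⟩ :=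
    exists_not_transGen_of_irrefl (r := Function.swap (OrientAdj A))
      (fun v h => hA v (transGen_swap.mp h))
      (S := {v | ∃ H, A H ≠ B H ∧ A H = v}) ⟨_, H₁, hH₁, rfl⟩
  obtain ⟨-, ⟨H₀, hH₀, hH₀₂, rfl⟩, hmin⟩ := exists_not_transGen_of_irrefl hB
      (S := {v | ∃ H, A H ≠ B H ∧ A H = A H₂ ∧ B H = v}) ⟨_, H₂, hH₂, rfl, rfl⟩
  refine ⟨H₀, hH₀, fun H hH => ?_, fun H hH hne => hmin _ ⟨H, hne, hH.trans hH₀₂, rfl⟩⟩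
  by_contra hc
  exact hmax _ ⟨H, hc, rfl⟩ (transGen_swap.mpr (hH₀₂ ▸ hH))

namespace IsExtremalDisagreement

variable {H₀ : {H // H ∈ ℍ}} (hH₀ : IsExtremalDisagreement A B H₀)
include hH₀

theorem transGen_orientAdj {u w : Fin n} (hu : TransGen (OrientAdj A) (A H₀) u)
    (h : TransGen (OrientAdj A) u w) : TransGen (OrientAdj B) u w := by
  have hedge : ∀ {u w}, TransGen (OrientAdj A) (A H₀) u → OrientAdj A u w → OrientAdj B u w := by
    rintro _ w hu ⟨K, rfl, hw, hwK⟩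
    exact ⟨K, (hH₀.agree_of_reach K hu).symm, hw, hwK⟩
  induction h with
  | single e => exact .single (hedge hu e)
  | tail h e ih => exact ih.tail (hedge (hu.trans h) e)

theorem not_transGen_detour (hAor : IsOrientation A) (hBac : IsAcyclic B) {u : Fin n}
    (hiu : OrientAdj A (A H₀) u) : ¬ TransGen (OrientAdj A) u (B H₀) := by
  intro hA
  rw [isAcyclic_iff_irrefl] at hBac
  have hB : TransGen (OrientAdj B) u (B H₀) := hH₀.transGen_orientAdj (.single hiu) hA
  have hji : OrientAdj B (B H₀) (A H₀) := orientAdj_of_mem (hAor H₀) hH₀.ne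
  obtain ⟨K, hK, hu, hui⟩ := hiu
  by_cases hKB : A K = B K
  · exact hBac _ ((hB.head ⟨K, hKB.symm.trans hK, hu, hui⟩).tail hji)
  · apply hH₀.not_reach_of_disagree K hK hKB
    by_cases huK : u = B K
    · exact huK ▸ hB
    · exact hB.head (orientAdj_of_mem hu huK)

theorem eq_of_flipped (hAor : IsOrientation A) (hBac : IsAcyclic B) {H : {H // H ∈ ℍ}}
    (hH : A H = A H₀) (hj : B H₀ ∈ H.1) : B H = B H₀ := by
  rw [isAcyclic_iff_irrefl] at hBac
  by_contra hne
  have hHj : OrientAdj B (B H) (B H₀) := orientAdj_of_mem hj (Ne.symm hne)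
  by_cases hBH : B H = A H₀
  · have hji : OrientAdj B (B H₀) (B H) := hBH ▸ orientAdj_of_mem (hAor H₀) hH₀.ne
    exact hBac _ ((TransGen.single hHj).tail hji)
  · exact hH₀.not_reach_of_disagree H hH (fun h => hBH (h ▸ hH)) (.single hHj)

end IsExtremalDisagreement

theorem exists_flipStep_le (hAor : IsOrientation A) (hBor : IsOrientation B)
    (hAac : IsAcyclic A) (hBac : IsAcyclic B) (hlt : A < B) :
    ∃ A', FlipStep A A' ∧ A' ≤ B := by
  obtain ⟨H₀, hH₀⟩ := exists_isExtremalDisagreement hAac hBac hlt.ne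
  have hij : A H₀ < B H₀ := lt_of_le_of_ne (hlt.le H₀) hH₀.ne
  have hedge : OrientAdj A (A H₀) (B H₀) := orientAdj_of_mem (hBor H₀) hH₀.ne.symm
  refine ⟨flipAt A (A H₀) (B H₀), ⟨hAor, isOrientation_flipAt hAor, hAac, ?_, A H₀, B H₀, ?_⟩, ?_⟩
  · exact isAcyclic_flipAt hAac fun u => hH₀.not_transGen_detour hAor hBac
  · exact isFlip_flipAt hij rfl (hBor H₀) fun H => source_ne_of_orientAdj hAac hedge
  · exact flipAt_le hlt.le fun H => hH₀.eq_of_flipped hAor hBac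

theorem le_of_reflTransGen_flipStep (h : ReflTransGen FlipStep A B) : A ≤ B :=
  reflTransGen_le_of_le (r := (· ≤ ·)) (fun _ _ hstep => (FlipStep.lt hstep).le) A B h

theorem reflTransGen_flipStep_of_le (hBor : IsOrientation B) (hBac : IsAcyclic B)
    (hAor : IsOrientation A) (hAac : IsAcyclic A) (hle : A ≤ B) : ReflTransGen FlipStep A B := by
  induction A using WellFoundedGT.induction with
  | _ A ih =>
    rcases hle.eq_or_lt with rfl | hlt
    · exact .refl
    obtain ⟨A', hstep, hA'⟩ := exists_flipStep_le hAor hBor hAac hBac hlt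
    exact .head hstep (ih A' (FlipStep.lt hstep) hstep.2.1 hstep.2.2.2.1 hA')

end HypergraphicPoset

theorem source_characterization_general
    (n : ℕ) (ℍ : Finset (Finset (Fin n)))
    (A B : {H // H ∈ ℍ} → Fin n)
    (hAor : IsOrientation A) (hBor : IsOrientation B)
    (hAac : IsAcyclic A) (hBac : IsAcyclic B) :
    Relation.ReflTransGen (FlipStep (ℍ := ℍ)) A B ↔
      ∀ H : {H // H ∈ ℍ}, A H ≤ B H :=
  ⟨HypergraphicPoset.le_of_reflTransGen_flipStep,
    HypergraphicPoset.reflTransGen_flipStep_of_le hBor hBac hAor hAac⟩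

/-- For acyclic orientations `A`, `B` of a hypergraph `ℍ` on `[n]`:
`A ≤ B` in the hypergraphic poset `P_ℍ` iff `A H ≤ B H` for every `H ∈ ℍ`. -/
theorem source_characterization
    (n : ℕ) (hn : 1 ≤ n) (ℍ : Finset (Finset (Fin n))) (hℍ : IsHypergraph n ℍ)
    (A B : {H // H ∈ ℍ} → Fin n)
    (hAor : IsOrientation A) (hBor : IsOrientation B)
    (hAac : IsAcyclic A) (hBac : IsAcyclic B) :
    Relation.ReflTransGen (FlipStep (ℍ := ℍ)) A B ↔
      ∀ H : {H // H ∈ ℍ}, A H ≤ B H :=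
  source_characterization_general n ℍ A B hAor hBor hAac hBac
end

section
/- Let ℍ be a hypergraph on [n], and let A ≠ B be orientations of ℍ related by an increasing flip between i and j, with A acyclic. Suppose there is a non-edge path λ from i to j in A and a hyperedge H' ∈ ℍ with A(H') = i and {i, j, k} ⊆ H' for some entry k of λ with k ∉ {i, j}. Then B is not acyclic. -/
/-- A loop-free closed walk of positive length contradicts acyclicity. -/
theorem aux_closed {n : ℕ} {ℍ : Finset (Finset (Fin n))}
    {A : {H // H ∈ ℍ} → Fin n} (hAac : IsAcyclic A)
    {L : ℕ} {g : ℕ → Fin n} (hL : 1 ≤ L) (hp : IsPath A L g)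
    (hloop : ∀ s < L, g s ≠ g (s + 1)) (hcl : g L = g 0) : False := by
  rcases Nat.lt_or_ge L 2 with h2 | h2
  · have hL1 : L = 1 := by omega
    subst hL1
    exact hloop 0 (by omega) (by rw [← hcl])
  · apply hAac
    set F : ℕ → {H // H ∈ ℍ} := fun u => if h : u < L then (hp u h).choose
      else (hp 0 (by omega)).choose with hF
    have hFspec : ∀ u, (hu : u < L) → A (F u) = g u ∧ g (u + 1) ∈ (F u).1 := by
      intro u hu
      simp only [hF, dif_pos hu]
      exact (hp u hu).choose_spec
    refine ⟨L, F, h2, ?_, ?_, ?_⟩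
    · intro u hu
      have h1 := hFspec (u + 1) hu
      have h0 := hFspec u (by omega)
      refine ⟨h1.1 ▸ h0.2, ?_⟩
      rw [h1.1, h0.1]
      exact (hloop u (by omega)).symm
    · have hs := hFspec (L - 1) (by omega)
      have e : L - 1 + 1 = L := by omega
      rw [e] at hs
      have h0 := hFspec 0 (by omega)
      rw [h0.1, ← hcl]
      exact hs.2
    · have hs := hFspec (L - 1) (by omega)
      have h0 := hFspec 0 (by omega)
      rw [h0.1, hs.1, ← hcl]
      have := hloop (L - 1) (by omega)
      have e : L - 1 + 1 = L := by omega
      rw [e] at this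
      exact this.symm

/-- Reduce a path from `i` to `j` through `k` to a loop-free such path. -/
theorem aux_reduce {n : ℕ} {ℍ : Finset (Finset (Fin n))}
    {A : {H // H ∈ ℍ} → Fin n} {i j k : Fin n} :
    ∀ L : ℕ, ∀ g : ℕ → Fin n, IsPath A L g → g 0 = i → g L = j →
      (∃ t ≤ L, g t = k) →
      ∃ L', ∃ g' : ℕ → Fin n, IsPath A L' g' ∧ g' 0 = i ∧ g' L' = j ∧
        (∃ t ≤ L', g' t = k) ∧ ∀ s < L', g' s ≠ g' (s + 1) := by
  intro L
  induction L using Nat.strong_induction_on with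
  | _ L IH =>
    intro g hp h0 hL hk
    by_cases hloop : ∀ s < L, g s ≠ g (s + 1)
    · exact ⟨L, g, hp, h0, hL, hk, hloop⟩
    · push_neg at hloop
      obtain ⟨s0, hs0L, hs0⟩ := hloop
      have hL1 : 1 ≤ L := by omega
      set g' : ℕ → Fin n := fun s => if s ≤ s0 then g s else g (s + 1) with hg'
      have hgle : ∀ s, s ≤ s0 → g' s = g s := by intro s hs; simp [hg', hs]
      have hggt : ∀ s, s0 < s → g' s = g (s + 1) := by
        intro s hs; simp [hg', Nat.not_le.mpr hs]
      apply IH (L - 1) (by omega) g'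
      · intro u hu
        by_cases h1 : u < s0
        · obtain ⟨H, hH1, hH2⟩ := hp u (by omega)
          exact ⟨H, by rw [hgle u (by omega)]; exact hH1,
            by rw [hgle (u + 1) (by omega)]; exact hH2⟩
        · obtain ⟨H, hH1, hH2⟩ := hp (u + 1) (by omega)
          refine ⟨H, ?_, by rw [hggt (u + 1) (by omega)]; exact hH2⟩
          rcases Nat.eq_or_lt_of_le (Nat.not_lt.mp h1) with he | hlt
          · rw [hgle u (by omega), ← he, hs0, he]; exact hH1
          · rw [hggt u hlt]; exact hH1
      · rw [hgle 0 (Nat.zero_le _)]; exact h0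
      · by_cases h1 : L - 1 ≤ s0
        · have he : s0 = L - 1 := by omega
          rw [hgle (L - 1) h1, ← he, hs0, he]
          have e : L - 1 + 1 = L := by omega
          rw [e]; exact hL
        · rw [hggt (L - 1) (by omega)]
          have e : L - 1 + 1 = L := by omega
          rw [e]; exact hL
      · obtain ⟨t, htL, htk⟩ := hk
        by_cases h1 : t ≤ s0
        · exact ⟨t, by omega, by rw [hgle t h1]; exact htk⟩
        · refine ⟨t - 1, by omega, ?_⟩
          rcases Nat.eq_or_lt_of_le (Nat.not_le.mp h1) with he | hlt
          · rw [hgle (t - 1) (by omega)]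
            have e : t - 1 = s0 := by omega
            have e2 : s0 + 1 = t := he
            rw [e, hs0, e2]; exact htk
          · rw [hggt (t - 1) (by omega)]
            have e : t - 1 + 1 = t := by omega
            rw [e]; exact htk

/-- If `A ≠ B` are related by an increasing flip between `i` and `j`, `A` is
acyclic, there is a non-edge path `λ = h` from `i` to `j` in `A`, and a hyperedge
`H'` with `A H' = i` and `{i, j, k} ⊆ H'` for some entry `k ∉ {i, j}` of `λ`,
then `B` is not acyclic. -/
theorem not_acyclic_of_hyperedge_meeting_path
    (n : ℕ) (hn : 1 ≤ n) (ℍ : Finset (Finset (Fin n))) (hℍ : IsHypergraph n ℍ)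
    (A B : {H // H ∈ ℍ} → Fin n)
    (hAor : IsOrientation A) (hBor : IsOrientation B)
    (hAac : IsAcyclic A)
    (i j : Fin n) (hflip : IsFlip A B i j)
    (m : ℕ) (h : ℕ → Fin n)
    (hpath : IsPath A m h) (h0 : h 0 = i) (hm : h m = j) (hlen : 1 < m)
    (H' : {H // H ∈ ℍ}) (k : Fin n) (t : ℕ)
    (hH'src : A H' = i)
    (ht : t ≤ m) (htk : h t = k) (hki : k ≠ i) (hkj : k ≠ j)
    (hiH' : i ∈ H'.1) (hjH' : j ∈ H'.1) (hkH' : k ∈ H'.1) :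
    ¬ IsAcyclic B := by
  intro hBac
  obtain ⟨L, g, hp, hg0, hgL, ⟨t', ht'L, ht'k⟩, hloop⟩ :=
    aux_reduce (A := A) (i := i) (j := j) (k := k) m h hpath h0 hm ⟨t, ht, htk⟩
  have ht'0 : 0 < t' := by
    rcases Nat.eq_zero_or_pos t' with rfl | hpos
    · rw [hg0] at ht'k; exact absurd ht'k.symm hki
    · exact hpos
  have ht'lt : t' < L := by
    rcases Nat.lt_or_ge t' L with hlt | hge
    · exact hlt
    · have : t' = L := by omega
      rw [this, hgL] at ht'k; exact absurd ht'k.symm hkj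
  -- no internal occurrence of i
  have hni : ∀ s, 0 < s → s < L → g s ≠ i := by
    intro s hs1 hsL e
    exact aux_closed hAac (L := s) hs1 (fun u hu => hp u (by omega))
      (fun u hu => hloop u (by omega)) (by rw [e, hg0])
  -- no occurrence of j before the end
  have hnj : ∀ s, s < L → g s ≠ j := by
    intro s hsL e
    refine aux_closed hAac (L := L - s) (g := fun u => g (s + u)) (by omega)
      (fun u hu => ?_) (fun u hu => ?_) ?_
    · have := hp (s + u) (by omega)
      simpa [Nat.add_assoc] using this
    · have := hloop (s + u) (by omega)
      simpa [Nat.add_assoc] using this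
    · have e2 : s + (L - s) = L := by omega
      simp only [e2, Nat.add_zero, hgL, e]
  -- B agrees with A on hyperedges not sourced at i
  have hBedge : ∀ H : {H // H ∈ ℍ}, A H ≠ i → B H = A H := by
    intro H hne
    by_contra h2
    exact hne ((hflip.2.2 H).1 fun e => h2 e.symm).1
  have hBH' : B H' = j := ((hflip.2.2 H').2 hiH' hjH').1 hH'src
  classical
  set E : ℕ → {H // H ∈ ℍ} := fun u =>
    Nat.casesOn u H' (fun v => if hv : t' + v < L then (hp (t' + v) hv).choose else H')
    with hE
  have hE0 : E 0 = H' := rfl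
  have hEspec : ∀ v, (hv : t' + v < L) →
      A (E (v + 1)) = g (t' + v) ∧ g (t' + v + 1) ∈ (E (v + 1)).1 := by
    intro v hv
    have : E (v + 1) = (hp (t' + v) hv).choose := by simp [hE, dif_pos hv]
    rw [this]
    exact (hp (t' + v) hv).choose_spec
  have hBE : ∀ v, (hv : t' + v < L) → B (E (v + 1)) = g (t' + v) := by
    intro v hv
    have hs := hEspec v hv
    rw [hBedge _ (by rw [hs.1]; exact hni _ (by omega) hv), hs.1]
  apply hBac
  refine ⟨L - t' + 1, E, by omega, ?_, ?_⟩
  · intro u hu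
    rcases Nat.eq_zero_or_pos u with rfl | hu1
    · have hb := hBE 0 (by omega)
      simp only [Nat.zero_add, Nat.add_zero] at hb ⊢
      rw [hb, ht'k, hE0, hBH']
      exact ⟨hkH', hkj⟩
    · obtain ⟨v, rfl⟩ := Nat.exists_eq_add_of_le hu1
      rw [Nat.add_comm 1 v]
      have hv1 : t' + v < L := by omega
      have hv2 : t' + (v + 1) < L := by omega
      have hb1 := hBE (v + 1) hv2
      have hb0 := hBE v hv1
      have hs := hEspec v hv1
      rw [hb1, hb0]
      have e1 : t' + (v + 1) = t' + v + 1 := by omega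
      rw [e1]
      exact ⟨hs.2, (hloop (t' + v) (by omega)).symm⟩
  · have e3 : L - t' + 1 - 1 = (L - t' - 1) + 1 := by omega
    have hw : t' + (L - t' - 1) < L := by omega
    have hs := hEspec (L - t' - 1) hw
    have hb := hBE (L - t' - 1) hw
    have e4 : t' + (L - t' - 1) + 1 = L := by omega
    have e5 : t' + (L - t' - 1) = L - 1 := by omega
    rw [e4] at hs
    rw [e5] at hb
    rw [e3, hE0, hBH', hb]
    exact ⟨hgL ▸ hs.2, (hnj (L - 1) (by omega)).symm⟩
end

section
/- Let ℍ be a hypergraph on [n] and let A, B be distinct acyclic orientations of ℍ with A(H) ≤ B(H) for all H ∈ ℍ. Let i be a vertex such that the set S_i = {H ∈ ℍ : A(H) = i and A(H) < B(H)} is nonempty, let 𝐇_i be a small hyperedge of S_i, and set j = B(𝐇_i). Let A' be the orientation obtained from A by the increasing flip between i and j, i.e., A'(H) = j if A(H) = i and {i,j} ⊆ H, and A'(H) = A(H) otherwise. Then A'(H) ≤ B(H) for all H ∈ ℍ. -/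
/-- Let `A ≠ B` be acyclic orientations with `A H ≤ B H` for all `H`. Let `i` be a
vertex, `Hi` a small hyperedge of `S_i = {H : A H = i, A H < B H}`, and `j = B Hi`.
Then the orientation `A'` obtained from `A` by the increasing flip between `i` and
`j` (i.e. `A' H = j` if `A H = i` and `{i, j} ⊆ H`, and `A' H = A H` otherwise)
satisfies `A' H ≤ B H` for all `H ∈ ℍ`. -/
theorem flip_at_small_hyperedge_le
    (n : ℕ) (hn : 1 ≤ n) (ℍ : Finset (Finset (Fin n))) (hℍ : IsHypergraph n ℍ)
    (A B : {H // H ∈ ℍ} → Fin n)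
    (hAor : IsOrientation A) (hBor : IsOrientation B)
    (hAac : IsAcyclic A) (hBac : IsAcyclic B)
    (hAB : A ≠ B) (hle : ∀ H : {H // H ∈ ℍ}, A H ≤ B H)
    (i : Fin n) (Hi : {H // H ∈ ℍ})
    (hsrc : A Hi = i) (hlt : A Hi < B Hi)
    (hsmall : ∀ H : {H // H ∈ ℍ}, A H = i → A H < B H → B Hi ≤ B H) :
    ∀ H : {H // H ∈ ℍ},
      (if A H = i ∧ i ∈ H.1 ∧ B Hi ∈ H.1 then B Hi else A H) ≤ B H := by
  intro H
  by_cases hc : A H = i ∧ i ∈ H.1 ∧ B Hi ∈ H.1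
  · rw [if_pos hc]
    obtain ⟨hAHi, hiH, hjH⟩ := hc
    rcases lt_or_eq_of_le (hle H) with h | h
    · exact hsmall H hAHi h
    · -- A H = B H = i, with j = B Hi ∈ H : gives a 2-cycle for B
      exfalso
      apply hBac
      have hij : i < B Hi := hsrc ▸ hlt
      refine ⟨2, fun t => if t = 0 then H else Hi, le_refl 2, ?_, ?_, ?_⟩
      · intro t ht
        have ht0 : t = 0 := by omega
        subst ht0
        simp only [reduceIte, if_true, if_pos rfl, if_neg (by norm_num : (1 : ℕ) ≠ 0)]
        exact ⟨hjH, by rw [← h, hAHi]; exact hij.ne'⟩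
      · show B (if (0:ℕ) = 0 then H else Hi) ∈ (if (2-1:ℕ) = 0 then H else Hi).1
        simp only [reduceIte, if_true, if_pos rfl, if_neg (by norm_num : (2 - 1 : ℕ) ≠ 0)]
        rw [← h, hAHi, ← hsrc]
        exact hAor Hi
      · show B (if (0:ℕ) = 0 then H else Hi) ≠ B (if (2-1:ℕ) = 0 then H else Hi)
        simp only [reduceIte, if_true, if_pos rfl, if_neg (by norm_num : (2 - 1 : ℕ) ≠ 0)]
        rw [← h, hAHi]
        exact hij.ne
  · rw [if_neg hc]
    exact hle H
end

section
/- Let ℍ be a hypergraph on [n], let A and B be distinct acyclic orientations of ℍ, and let H ∈ ℍ with i = A(H) < j = B(H). Then for every non-edge path λ = [i, h, …, j] from i to j in A there exists a hyperedge H' ∈ ℍ such that (1) A(H') ≠ B(H'), and (2) [A(H'), h'] is a pair of consecutive entries of λ for some h' ∈ H'. -/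
lemma no_lax_cycle {n : ℕ} {ℍ : Finset (Finset (Fin n))}
    {B : {H // H ∈ ℍ} → Fin n} (hB : IsAcyclic B) :
    ∀ (m : ℕ) (f : ℕ → Fin n) (g : ℕ → {H // H ∈ ℍ}),
      (∀ t < m, B (g t) = f t ∧ f (t + 1) ∈ (g t).1) →
      f m = f 0 → (∃ s < m, f s ≠ f (s + 1)) → False := by
  intro m
  induction m using Nat.strong_induction_on with
  | _ m ih =>
  intro f g hstep hclosed hs
  obtain ⟨s, hsm, hs⟩ := hs
  by_cases hrep : ∃ r < m, f r = f (r + 1)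
  · obtain ⟨r, hrm, hr⟩ := hrep
    have hsr : s ≠ r := fun h => hs (h ▸ hr)
    have hm2 : 2 ≤ m := by omega
    refine ih (m - 1) (by omega) (fun t => if t ≤ r then f t else f (t + 1))
      (fun t => if t < r then g t else g (t + 1)) ?_ ?_ ?_
    · intro t ht
      by_cases htr : t < r
      · simp only [if_pos htr, if_pos (Nat.le_of_lt htr), if_pos (Nat.succ_le_of_lt htr)]
        exact hstep t (by omega)
      · have hft : (if t ≤ r then f t else f (t + 1)) = f (t + 1) := by
          split_ifs with h
          · have : t = r := by omega
            subst this
            exact hr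
          · rfl
        simp only [if_neg htr, hft, if_neg (show ¬ t + 1 ≤ r by omega)]
        exact hstep (t + 1) (by omega)
    · have h0 : (if (0:ℕ) ≤ r then f 0 else f 1) = f 0 := by simp
      by_cases h : m - 1 ≤ r
      · have : r = m - 1 := by omega
        subst this
        simp only [if_pos h, if_pos (Nat.zero_le _)]
        have : m - 1 + 1 = m := by omega
        rw [hr, this, hclosed]
      · simp only [if_neg h, if_pos (Nat.zero_le _)]
        have : m - 1 + 1 = m := by omega
        rw [this, hclosed]
    · rcases Nat.lt_or_ge s r with h | h
      · refine ⟨s, by omega, ?_⟩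
        simp only [if_pos (Nat.le_of_lt h), if_pos (Nat.succ_le_of_lt h)]
        exact hs
      · have hsr' : r < s := by omega
        refine ⟨s - 1, by omega, ?_⟩
        have h1 : (if s - 1 ≤ r then f (s - 1) else f (s - 1 + 1)) = f s := by
          split_ifs with h'
          · have : s - 1 = r := by omega
            rw [this, hr]
            congr 1
            omega
          · congr 1
            omega
        have h2 : (if s - 1 + 1 ≤ r then f (s - 1 + 1) else f (s - 1 + 1 + 1)) = f (s + 1) := by
          rw [if_neg (by omega)]
          congr 1
          omega
        simp only [h1, h2]
        exact hs
  · push_neg at hrep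
    have hm2 : 2 ≤ m := by
      by_contra h
      have hm1 : m = 1 := by omega
      subst hm1
      have hs0 : s = 0 := by omega
      subst hs0
      exact hs (hclosed.symm)
    refine hB ⟨m, g, hm2, ?_, ?_, ?_⟩
    · intro t ht
      obtain ⟨h1, h2⟩ := hstep (t + 1) (by omega)
      refine ⟨h1 ▸ (hstep t (by omega)).2, ?_⟩
      rw [h1, (hstep t (by omega)).1]
      exact Ne.symm (hrep t (by omega))
    · rw [(hstep 0 (by omega)).1, ← hclosed]
      have : m - 1 + 1 = m := by omega
      exact this ▸ (hstep (m - 1) (by omega)).2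
    · rw [(hstep 0 (by omega)).1, (hstep (m - 1) (by omega)).1, ← hclosed]
      have hne := hrep (m - 1) (by omega)
      have : m - 1 + 1 = m := by omega
      rw [this] at hne
      exact fun h => hne h.symm

/-- Let `A ≠ B` be distinct acyclic orientations and `H ∈ ℍ` with
`i = A H < j = B H`. Then for every non-edge path `λ = [i, h, …, j]` from `i` to
`j` in `A` there is a hyperedge `H'` with (1) `A H' ≠ B H'`, and (2)
`[A H', h']` consecutive in `λ` for some `h' ∈ H'`. -/
theorem exists_moved_source_on_path
    (n : ℕ) (hn : 1 ≤ n) (ℍ : Finset (Finset (Fin n))) (hℍ : IsHypergraph n ℍ)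
    (A B : {H // H ∈ ℍ} → Fin n)
    (hAor : IsOrientation A) (hBor : IsOrientation B)
    (hAac : IsAcyclic A) (hBac : IsAcyclic B)
    (hAB : A ≠ B)
    (H : {H // H ∈ ℍ}) (hij : A H < B H)
    (m : ℕ) (f : ℕ → Fin n) (hlen : 1 < m)
    (hpath : IsPath A m f) (h0 : f 0 = A H) (hm : f m = B H) :
    ∃ (H' : {H // H ∈ ℍ}) (t : ℕ), t < m ∧
      A H' ≠ B H' ∧ f t = A H' ∧ f (t + 1) ∈ H'.1 := by
  by_contra hcon
  push_neg at hcon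
  have hne : A H ≠ B H := ne_of_lt hij
  -- choose a hyperedge for each step; beyond m use H itself
  have hch : ∀ t, ∃ K : {H // H ∈ ℍ},
      (t < m → B K = f t ∧ f (t + 1) ∈ K.1) ∧ (m ≤ t → K = H) := by
    intro t
    by_cases ht : t < m
    · obtain ⟨K, hK1, hK2⟩ := hpath t ht
      refine ⟨K, fun _ => ⟨?_, hK2⟩, fun h => absurd ht (by omega)⟩
      by_cases hKe : A K = B K
      · rw [← hKe, hK1]
      · exact absurd hK2 (hcon K t ht hKe hK1.symm)
    · exact ⟨H, fun h => absurd h ht, fun _ => rfl⟩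
  choose G hG1 hG2 using hch
  have key := no_lax_cycle hBac (m + 1)
    (fun t => if t ≤ m then f t else f 0)
    (fun t => if t < m then G t else H) ?_ ?_ ?_
  · exact key
  · intro t ht
    by_cases htm : t < m
    · simp only [if_pos htm, if_pos (Nat.le_of_lt htm), if_pos (Nat.succ_le_of_lt htm)]
      exact hG1 t htm
    · simp only [show t = m by omega, if_neg (lt_irrefl m), if_pos (le_refl m),
        if_neg (show ¬ m + 1 ≤ m by omega)]
      rw [hm, h0]
      exact ⟨rfl, hAor H⟩
  · simp only [if_neg (show ¬ m + 1 ≤ m by omega), if_pos (Nat.zero_le m)]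
  · refine ⟨m, by omega, ?_⟩
    simp only [if_pos (le_refl m), if_neg (show ¬ m + 1 ≤ m by omega), hm, h0]
    exact fun h => hne h.symm
end

section
/- Let ℍ be a hypergraph on [n] and let A, B be distinct acyclic orientations of ℍ with A(H) ≤ B(H) for all H ∈ ℍ. Then there exist vertices i < j and an acyclic orientation A' of ℍ such that A and A' are related by an increasing flip between i and j, A ≠ A', A(H) ≤ A'(H) ≤ B(H) for all H ∈ ℍ. -/
/-!
Write `u → v` when some hyperedge `H` has source `u` and contains `v ≠ u`; an orientation is acyclic
exactly when the transitive closure of `→` is irreflexive. Among the hyperedges on which `A` and `B`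
disagree, pick one whose `B`-source `j` is minimal for `→_B`, and among those with `B`-source `j` one
whose `A`-source `i` is maximal for `→_A`. Moving the source of every hyperedge with `A`-source `i`
containing `j` to `j` is an increasing flip, and minimality of `j` forces every moved hyperedge to
have `B`-source `j`. The only new arcs start at `j`, so a cycle of the flipped orientation returns
to `j` along arcs of `A`; following that return path shows either a `B`-cycle through `j` or an
`A`-path from `i` to the `A`-source of another disagreement with `B`-source `j`, contradicting the
choice of `i`.
-/

open Relation

variable {n : ℕ} {ℍ : Finset (Finset (Fin n))}

def Arc (C : {H // H ∈ ℍ} → Fin n) (u v : Fin n) : Prop :=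
  u ≠ v ∧ ∃ H : {H // H ∈ ℍ}, C H = u ∧ v ∈ H.1

section Arc

variable {C : {H // H ∈ ℍ} → Fin n}

lemma reflTransGen_arc_of_mem {H : {H // H ∈ ℍ}} {v : Fin n} (hv : v ∈ H.1) :
    ReflTransGen (Arc C) (C H) v := by
  by_cases h : C H = v
  · rw [h]
  · exact .single ⟨h, H, rfl, hv⟩

lemma exists_hyperedges_of_transGen_arc {u v : Fin n} (h : TransGen (Arc C) u v) :
    ∃ k, 1 ≤ k ∧ ∃ Hs : ℕ → {H // H ∈ ℍ}, C (Hs 0) = u ∧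
      (∀ t, t + 1 < k → C (Hs (t + 1)) ∈ (Hs t).1 ∧ C (Hs (t + 1)) ≠ C (Hs t)) ∧
      v ∈ (Hs (k - 1)).1 ∧ v ≠ C (Hs (k - 1)) := by
  induction h using TransGen.head_induction_on with
  | single huv =>
    obtain ⟨hne, H, rfl, hv⟩ := huv
    exact ⟨1, le_rfl, fun _ => H, rfl, fun t ht => by omega, hv, hne.symm⟩
  | head hab _ ih =>
    obtain ⟨hne, H, rfl, hb⟩ := hab
    obtain ⟨k, hk, Hs, rfl, hsteps, hv, hvne⟩ := ih
    have hk0 : k ≠ 0 := by omega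
    refine ⟨k + 1, by omega, fun t => if t = 0 then H else Hs (t - 1), rfl, ?_, ?_⟩
    · rintro (_ | t) ht
      · simpa using ⟨hb, Ne.symm hne⟩
      · simpa using hsteps t (by omega)
    · simpa [hk0] using ⟨hv, hvne⟩

theorem isAcyclic_iff_forall_not_transGen_arc :
    IsAcyclic C ↔ ∀ v, ¬ TransGen (Arc C) v v := by
  constructor
  · intro hC v hv
    obtain ⟨k, hk, Hs, rfl, hsteps, hlast, hne⟩ := exists_hyperedges_of_transGen_arc hv
    rcases hk.eq_or_lt with rfl | hk
    · exact hne rfl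
    · exact hC ⟨k, Hs, hk, hsteps, hlast, hne⟩
  · rintro h ⟨k, Hs, hk, hsteps, hlast, hne⟩
    have hpath : ∀ t ≤ k - 1, ReflTransGen (Arc C) (C (Hs 0)) (C (Hs t)) := by
      intro t ht
      induction t with
      | zero => rfl
      | succ t ih =>
        have hstep := hsteps t (by omega)
        exact (ih (by omega)).tail ⟨hstep.2.symm, Hs t, rfl, hstep.1⟩
    exact h _ (TransGen.tail' (hpath _ le_rfl) ⟨hne.symm, _, rfl, hlast⟩)

lemma IsAcyclic.wellFounded_transGen_arc (hC : IsAcyclic C) : WellFounded (TransGen (Arc C)) :=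
  have : Std.Irrefl (TransGen (Arc C)) := ⟨isAcyclic_iff_forall_not_transGen_arc.1 hC⟩
  Finite.wellFounded_of_trans_of_irrefl _

lemma IsAcyclic.wellFounded_swap_transGen_arc (hC : IsAcyclic C) :
    WellFounded (Function.swap (TransGen (Arc C))) :=
  have : Std.Irrefl (TransGen (Arc C)) := ⟨isAcyclic_iff_forall_not_transGen_arc.1 hC⟩
  Finite.wellFounded_of_trans_of_irrefl _

end Arc

structure IsExtremalDisagreement (A B : {H // H ∈ ℍ} → Fin n) (i j : Fin n) : Prop where
  exists_edge : ∃ H, A H ≠ B H ∧ A H = i ∧ B H = j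
  minimal : ∀ H, A H ≠ B H → ¬ TransGen (Arc B) (B H) j
  maximal : ∀ H, A H ≠ B H → B H = j → ¬ TransGen (Arc A) i (A H)

def flipOrientation (A : {H // H ∈ ℍ} → Fin n) (i j : Fin n) : {H // H ∈ ℍ} → Fin n :=
  fun H => if A H = i ∧ j ∈ H.1 then j else A H

def UnflippedArc (A : {H // H ∈ ℍ} → Fin n) (i j u v : Fin n) : Prop :=
  u ≠ v ∧ ∃ H : {H // H ∈ ℍ}, ¬ (A H = i ∧ j ∈ H.1) ∧ A H = u ∧ v ∈ H.1

section Flip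

variable {A B : {H // H ∈ ℍ} → Fin n} {i j : Fin n}

lemma exists_isExtremalDisagreement (hAac : IsAcyclic A) (hBac : IsAcyclic B) (hAB : A ≠ B) :
    ∃ i j, IsExtremalDisagreement A B i j := by
  obtain ⟨H₀, hH₀⟩ := Function.ne_iff.1 hAB
  obtain ⟨_, ⟨H₁, hD₁, rfl⟩, hjmin⟩ :=
    hBac.wellFounded_transGen_arc.has_min {v | ∃ H, A H ≠ B H ∧ B H = v} ⟨_, H₀, hH₀, rfl⟩
  obtain ⟨_, ⟨H₂, hD₂, hB₂, rfl⟩, himax⟩ :=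
    hAac.wellFounded_swap_transGen_arc.has_min {w | ∃ H, A H ≠ B H ∧ B H = B H₁ ∧ A H = w}
      ⟨_, H₁, hD₁, rfl, rfl⟩
  exact ⟨A H₂, B H₁, ⟨⟨H₂, hD₂, rfl, hB₂⟩, fun H hD => hjmin _ ⟨H, hD, rfl⟩,
    fun H hD hB => himax _ ⟨H, hD, hB, rfl⟩⟩⟩

lemma flipOrientation_of_flipped {H : {H // H ∈ ℍ}} (hi : A H = i) (hj : j ∈ H.1) :
    flipOrientation A i j H = j :=
  if_pos ⟨hi, hj⟩

lemma flipOrientation_of_not_flipped {H : {H // H ∈ ℍ}} (h : ¬ (A H = i ∧ j ∈ H.1)) :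
    flipOrientation A i j H = A H :=
  if_neg h

lemma isOrientation_flipOrientation (hA : IsOrientation A) :
    IsOrientation (flipOrientation A i j) := by
  intro H
  by_cases h : A H = i ∧ j ∈ H.1
  · rw [flipOrientation_of_flipped h.1 h.2]; exact h.2
  · rw [flipOrientation_of_not_flipped h]; exact hA H

lemma le_flipOrientation (hij : i ≤ j) (H : {H // H ∈ ℍ}) : A H ≤ flipOrientation A i j H := by
  by_cases h : A H = i ∧ j ∈ H.1
  · rw [flipOrientation_of_flipped h.1 h.2, h.1]; exact hij
  · rw [flipOrientation_of_not_flipped h]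

lemma UnflippedArc.arc {u v : Fin n} (h : UnflippedArc A i j u v) : Arc A u v :=
  let ⟨hne, H, _, hu, hv⟩ := h
  ⟨hne, H, hu, hv⟩

lemma UnflippedArc.arc_flipOrientation {u v : Fin n} (h : UnflippedArc A i j u v) :
    Arc (flipOrientation A i j) u v :=
  let ⟨hne, H, hH, hu, hv⟩ := h
  ⟨hne, H, (flipOrientation_of_not_flipped hH).trans hu, hv⟩

lemma unflippedArc_or_of_arc_flipOrientation {u v : Fin n}
    (h : Arc (flipOrientation A i j) u v) :
    UnflippedArc A i j u v ∨ u = j ∧ v ≠ j ∧ ∃ H : {H // H ∈ ℍ}, A H = i ∧ j ∈ H.1 ∧ v ∈ H.1 := by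
  obtain ⟨hne, H, hu, hv⟩ := h
  by_cases hH : A H = i ∧ j ∈ H.1
  · rw [flipOrientation_of_flipped hH.1 hH.2] at hu
    exact .inr ⟨hu.symm, hu ▸ hne.symm, H, hH.1, hH.2, hv⟩
  · rw [flipOrientation_of_not_flipped hH] at hu
    exact .inl ⟨hne, H, hH, hu, hv⟩

lemma transGen_unflippedArc_or_through_of_transGen_flipOrientation {x y : Fin n}
    (h : TransGen (Arc (flipOrientation A i j)) x y) :
    TransGen (UnflippedArc A i j) x y ∨
      ReflTransGen (Arc (flipOrientation A i j)) x j ∧ TransGen (Arc (flipOrientation A i j)) j y := by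
  induction h with
  | single hxy =>
    rcases unflippedArc_or_of_arc_flipOrientation hxy with hold | ⟨rfl, -⟩
    · exact .inl (.single hold)
    · exact .inr ⟨.refl, .single hxy⟩
  | tail _ hbc ih =>
    rcases ih, unflippedArc_or_of_arc_flipOrientation hbc with
      ⟨hxb | ⟨hxj, hjb⟩, hold | ⟨rfl, -⟩⟩
    · exact .inl (hxb.tail hold)
    · exact .inr ⟨(TransGen.mono (fun _ _ => UnflippedArc.arc_flipOrientation) _ _ hxb).to_reflTransGen, .single hbc⟩
    · exact .inr ⟨hxj, hjb.tail hbc⟩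
    · exact .inr ⟨hxj, hjb.tail hbc⟩

lemma transGen_unflippedArc_or_last_flipped_of_transGen_flipOrientation {x y : Fin n}
    (h : TransGen (Arc (flipOrientation A i j)) x y) :
    TransGen (UnflippedArc A i j) x y ∨
      ∃ (w : Fin n) (H : {H // H ∈ ℍ}), A H = i ∧ j ∈ H.1 ∧ w ∈ H.1 ∧ w ≠ j ∧
        ReflTransGen (UnflippedArc A i j) w y := by
  induction h with
  | single hxy =>
    rcases unflippedArc_or_of_arc_flipOrientation hxy with hold | ⟨-, hyj, H, hi, hj, hy⟩
    · exact .inl (.single hold)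
    · exact .inr ⟨_, H, hi, hj, hy, hyj, .refl⟩
  | tail _ hbc ih =>
    rcases unflippedArc_or_of_arc_flipOrientation hbc with hold | ⟨-, hcj, H, hi, hj, hc⟩
    · rcases ih with hxb | ⟨w, H, hi, hj, hw, hwj, hwb⟩
      · exact .inl (hxb.tail hold)
      · exact .inr ⟨w, H, hi, hj, hw, hwj, hwb.tail hold⟩
    · exact .inr ⟨_, H, hi, hj, hc, hcj, .refl⟩

lemma exists_flipped_return_of_transGen_flipOrientation (hAac : IsAcyclic A) {x : Fin n}
    (h : TransGen (Arc (flipOrientation A i j)) x x) :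
    ∃ (w : Fin n) (H : {H // H ∈ ℍ}), A H = i ∧ j ∈ H.1 ∧ w ∈ H.1 ∧ w ≠ j ∧
      ReflTransGen (UnflippedArc A i j) w j := by
  have hAloop : ∀ v, ¬ TransGen (UnflippedArc A i j) v v := fun v hv =>
    isAcyclic_iff_forall_not_transGen_arc.1 hAac v (TransGen.mono (fun _ _ => UnflippedArc.arc) _ _ hv)
  have hj : TransGen (Arc (flipOrientation A i j)) j j := by
    rcases transGen_unflippedArc_or_through_of_transGen_flipOrientation h with hx | ⟨hxj, hjx⟩
    · exact absurd hx (hAloop x)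
    · exact hjx.trans_left hxj
  exact (transGen_unflippedArc_or_last_flipped_of_transGen_flipOrientation hj).resolve_left (hAloop j)

namespace IsExtremalDisagreement

variable (h : IsExtremalDisagreement A B i j)
include h

lemma lt (hle : ∀ H, A H ≤ B H) : i < j := by
  obtain ⟨H, hD, rfl, rfl⟩ := h.exists_edge
  exact (hle H).lt_of_ne hD

lemma apply_eq_of_flipped (hAor : IsOrientation A) (hBac : IsAcyclic B) {H : {H // H ∈ ℍ}}
    (hi : A H = i) (hj : j ∈ H.1) : B H = j := by
  obtain ⟨H₀, hD₀, rfl, rfl⟩ := h.exists_edge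
  by_cases hD : A H = B H
  · exact absurd (.head ⟨hD₀, H, hD ▸ hi, hj⟩ (.single ⟨hD₀.symm, H₀, rfl, hAor H₀⟩))
      (isAcyclic_iff_forall_not_transGen_arc.1 hBac _)
  · by_contra hBj
    exact h.minimal H hD (.single ⟨hBj, H, rfl, hj⟩)

lemma flipOrientation_le (hAor : IsOrientation A) (hBac : IsAcyclic B) (hle : ∀ H, A H ≤ B H)
    (H : {H // H ∈ ℍ}) : flipOrientation A i j H ≤ B H := by
  by_cases hH : A H = i ∧ j ∈ H.1
  · rw [flipOrientation_of_flipped hH.1 hH.2, h.apply_eq_of_flipped hAor hBac hH.1 hH.2]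
  · rw [flipOrientation_of_not_flipped hH]; exact hle H

/-- The first disagreement hyperedge along the path has `B`-source `j`, by minimality of `j`. -/
lemma reflTransGen_arc_or_exists_of_reflTransGen_unflippedArc (hBor : IsOrientation B)
    {v : Fin n} (hv : ReflTransGen (UnflippedArc A i j) v j) :
    ReflTransGen (Arc B) v j ∨
      ∃ G, A G ≠ B G ∧ B G = j ∧ A G ≠ i ∧ ReflTransGen (UnflippedArc A i j) v (A G) := by
  induction hv using ReflTransGen.head_induction_on with
  | refl => exact .inl .refl
  | head hac _ ih =>
    obtain ⟨hne, G, hG, rfl, hc⟩ := hac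
    by_cases hD : A G = B G
    · rcases ih with hB | ⟨G', hD', hB', hi', hpath⟩
      · exact .inl (.head ⟨hne, G, hD.symm, hc⟩ hB)
      · exact .inr ⟨G', hD', hB', hi', .head ⟨hne, G, hG, rfl, hc⟩ hpath⟩
    by_cases hBj : B G = j
    · exact .inr ⟨G, hD, hBj, fun hi => hG ⟨hi, hBj ▸ hBor G⟩, .refl⟩
    rcases ih with hB | ⟨G', hD', hB', hi', hpath⟩
    · have hGj := (reflTransGen_arc_of_mem hc).trans hB
      exact absurd ((reflTransGen_iff_eq_or_transGen.1 hGj).resolve_left (Ne.symm hBj))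
        (h.minimal G hD)
    · exact .inr ⟨G', hD', hB', hi', .head ⟨hne, G, hG, rfl, hc⟩ hpath⟩

lemma isAcyclic_flipOrientation (hAor : IsOrientation A) (hBor : IsOrientation B)
    (hAac : IsAcyclic A) (hBac : IsAcyclic B) : IsAcyclic (flipOrientation A i j) := by
  refine isAcyclic_iff_forall_not_transGen_arc.2 fun x hx => ?_
  obtain ⟨w, E, hi, hj, hw, hwj, hwj'⟩ := exists_flipped_return_of_transGen_flipOrientation hAac hx
  rcases h.reflTransGen_arc_or_exists_of_reflTransGen_unflippedArc hBor hwj' with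
    hB | ⟨G, hD, hBG, hiG, hpath⟩
  · have hBE := h.apply_eq_of_flipped hAor hBac hi hj
    exact isAcyclic_iff_forall_not_transGen_arc.1 hBac j
      (.head' ⟨hwj.symm, E, hBE, hw⟩ hB)
  · have hiw : ReflTransGen (Arc A) (A E) (A G) :=
      (reflTransGen_arc_of_mem hw).trans (ReflTransGen.mono (fun _ _ => UnflippedArc.arc) _ _ hpath)
    rw [hi] at hiw
    exact h.maximal G hD hBG ((reflTransGen_iff_eq_or_transGen.1 hiw).resolve_left hiG)

lemma isFlip_flipOrientation (hBor : IsOrientation B) (hAac : IsAcyclic A) (hij : i < j) :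
    IsFlip A (flipOrientation A i j) i j := by
  obtain ⟨H₀, -, hA₀, hB₀⟩ := h.exists_edge
  have hj₀ : j ∈ H₀.1 := hB₀ ▸ hBor H₀
  have hne : A ≠ flipOrientation A i j := fun hA =>
    hij.ne (hA₀.symm.trans (congrFun hA H₀ ▸ flipOrientation_of_flipped hA₀ hj₀))
  refine ⟨hij, hne, fun H => ⟨fun hH => ?_, fun hiH hjH => ⟨fun hAi => ?_, fun hA'j => ?_⟩⟩⟩
  · by_cases hf : A H = i ∧ j ∈ H.1
    · exact ⟨hf.1, flipOrientation_of_flipped hf.1 hf.2⟩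
    · exact absurd (flipOrientation_of_not_flipped hf).symm hH
  · exact flipOrientation_of_flipped hAi hjH
  · by_contra hAi
    have hAj : A H = j := (flipOrientation_of_not_flipped fun hf => hAi hf.1).symm.trans hA'j
    exact isAcyclic_iff_forall_not_transGen_arc.1 hAac i
      (.head ⟨hij.ne, H₀, hA₀, hj₀⟩ (.single ⟨hij.ne', H, hAj, hiH⟩))

end IsExtremalDisagreement

end Flip

theorem exists_coherent_flip_between_general
    (n : ℕ) (ℍ : Finset (Finset (Fin n)))
    (A B : {H // H ∈ ℍ} → Fin n)
    (hAor : IsOrientation A) (hBor : IsOrientation B)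
    (hAac : IsAcyclic A) (hBac : IsAcyclic B)
    (hAB : A ≠ B) (hle : ∀ H : {H // H ∈ ℍ}, A H ≤ B H) :
    ∃ (i j : Fin n) (A' : {H // H ∈ ℍ} → Fin n), i < j ∧
      IsOrientation A' ∧ IsAcyclic A' ∧ IsFlip A A' i j ∧ A ≠ A' ∧
      ∀ H : {H // H ∈ ℍ}, A H ≤ A' H ∧ A' H ≤ B H := by
  obtain ⟨i, j, h⟩ := exists_isExtremalDisagreement hAac hBac hAB
  have hij : i < j := h.lt hle
  have hflip := h.isFlip_flipOrientation hBor hAac hij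
  exact ⟨i, j, flipOrientation A i j, hij, isOrientation_flipOrientation hAor,
    h.isAcyclic_flipOrientation hAor hBor hAac hBac, hflip, hflip.2.1,
    fun H => ⟨le_flipOrientation hij.le H, h.flipOrientation_le hAor hBac hle H⟩⟩

/-- Let `A ≠ B` be distinct acyclic orientations with `A H ≤ B H` for all `H ∈ ℍ`.
Then there exist vertices `i < j` and an acyclic orientation `A'` related to `A`
by an increasing flip between `i` and `j`, with `A ≠ A'` and
`A H ≤ A' H ≤ B H` for all `H ∈ ℍ`. -/
theorem exists_coherent_flip_between
    (n : ℕ) (hn : 1 ≤ n) (ℍ : Finset (Finset (Fin n))) (hℍ : IsHypergraph n ℍ)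
    (A B : {H // H ∈ ℍ} → Fin n)
    (hAor : IsOrientation A) (hBor : IsOrientation B)
    (hAac : IsAcyclic A) (hBac : IsAcyclic B)
    (hAB : A ≠ B) (hle : ∀ H : {H // H ∈ ℍ}, A H ≤ B H) :
    ∃ (i j : Fin n) (A' : {H // H ∈ ℍ} → Fin n), i < j ∧
      IsOrientation A' ∧ IsAcyclic A' ∧ IsFlip A A' i j ∧ A ≠ A' ∧
      ∀ H : {H // H ∈ ℍ}, A H ≤ A' H ∧ A' H ≤ B H :=
  exists_coherent_flip_between_general n ℍ A B hAor hBor hAac hBac hAB hle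
end

section
/- Let ℍ be a hypergraph on [n] and let A, B be distinct acyclic orientations of ℍ with A(H) ≤ B(H) for all H ∈ ℍ. Let H ∈ ℍ with i = A(H) < j = B(H) be such that B(H) = min{B(H') : H' ∈ ℍ, A(H') = i, A(H') < B(H'), j ∈ H'}. Let A' be the orientation obtained from A by the increasing flip between i and j, i.e., A'(H') = j if A(H') = i and {i,j} ⊆ H', and A'(H') = A(H') otherwise. Then A'(H') ≤ B(H') for all H' ∈ ℍ. -/
/-- Let `A ≠ B` be distinct acyclic orientations with `A H' ≤ B H'` for all `H'`.
Let `H ∈ ℍ` with `i = A H < j = B H` be such that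
`B H = min {B H' : A H' = i, A H' < B H', j ∈ H'}`. Then the orientation `A'`
obtained from `A` by the increasing flip between `i` and `j` (i.e. `A' H' = j` if
`A H' = i` and `{i, j} ⊆ H'`, else `A' H' = A H'`) satisfies `A' H' ≤ B H'` for
all `H' ∈ ℍ`. -/
theorem flip_at_min_hyperedge_le
    (n : ℕ) (hn : 1 ≤ n) (ℍ : Finset (Finset (Fin n))) (hℍ : IsHypergraph n ℍ)
    (A B : {H // H ∈ ℍ} → Fin n)
    (hAor : IsOrientation A) (hBor : IsOrientation B)
    (hAac : IsAcyclic A) (hBac : IsAcyclic B)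
    (hAB : A ≠ B) (hle : ∀ H : {H // H ∈ ℍ}, A H ≤ B H)
    (H : {H // H ∈ ℍ}) (hij : A H < B H)
    (hmin : ∀ H' : {H // H ∈ ℍ},
      A H' = A H → A H' < B H' → B H ∈ H'.1 → B H ≤ B H') :
    ∀ H' : {H // H ∈ ℍ},
      (if A H' = A H ∧ A H ∈ H'.1 ∧ B H ∈ H'.1 then B H else A H') ≤ B H' := by
  intro H'
  by_cases hc : A H' = A H ∧ A H ∈ H'.1 ∧ B H ∈ H'.1
  · rw [if_pos hc]
    obtain ⟨h1, h2, h3⟩ := hc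
    have hlt : A H' < B H' := by
      rcases lt_or_eq_of_le (hle H') with h | h
      · exact h
      · -- B H' = A H' = A H, gives a 2-cycle in B
        exfalso
        apply hBac
        have hBH' : B H' = A H := h1 ▸ h.symm
        refine ⟨2, fun t => if t = 0 then H' else H, le_refl 2, ?_, ?_, ?_⟩
        · intro t ht
          have ht0 : t = 0 := by omega
          subst ht0
          norm_num [hBH']
          exact ⟨h3, Ne.symm (ne_of_lt hij)⟩
        · norm_num [hBH']
          exact hAor H
        · norm_num [hBH']
          exact ne_of_lt hij
    exact hmin H' h1 hlt h3
  · rw [if_neg hc]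
    exact hle H'
end

section
/- Let ℍ be a hypergraph on [n]. For every acyclic orientation A of ℍ there exists a permutation π of [n] such that O_π = A; that is, the map π ↦ O_π is a surjection from permutations of [n] onto acyclic orientations of ℍ. -/
/-- The orientation `O_π` associated with a permutation `π` of `[n]`:
`O_π H = π (min {k : π k ∈ H})`, i.e. the first element of `H` in the list
`π 0, π 1, …` (junk value `0` for empty `H`). -/
def Opi {n : ℕ} [NeZero n] (π : Equiv.Perm (Fin n)) (H : Finset (Fin n)) : Fin n :=
  if h : (Finset.univ.filter fun k => π k ∈ H).Nonempty then
    π ((Finset.univ.filter fun k => π k ∈ H).min' h)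
  else 0

/-!
An acyclic orientation `A` induces a relation on vertices: `i → j` whenever `i` is the source of
a hyperedge containing `j ≠ i`. A cycle of this relation unfolds into a cycle of hyperedges
forbidden by acyclicity, so the relation has a topological sort `π` (Szpilrajn's extension
theorem). In the list `π 0, π 1, …` the source `A H` precedes every other vertex of `H`, i.e.
`O_π H = A H`.
-/

open Relation

theorem exists_topologicalSort {α : Type*} [Fintype α] {r : α → α → Prop}
    (hr : ∀ a, ¬ TransGen r a a) {n : ℕ} (hcard : Fintype.card α = n) :
    ∃ π : Fin n ≃ α, ∀ i j, r (π i) (π j) → i < j := by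
  have : IsPartialOrder α (ReflTransGen r) :=
    { refl := fun _ => .refl
      trans := fun _ _ _ => .trans
      antisymm := fun a b hab hba => by
        rcases reflTransGen_iff_eq_or_transGen.mp hab with rfl | hab
        · rfl
        rcases reflTransGen_iff_eq_or_transGen.mp hba with rfl | hba
        · rfl
        exact (hr a (hab.trans hba)).elim }
  obtain ⟨s, hs, hrs⟩ := extend_partialOrder (ReflTransGen r)
  let : LinearOrder α :=
    { le := s
      le_refl := hs.refl
      le_trans := fun _ _ _ => hs.trans _ _ _
      le_antisymm := fun _ _ => hs.antisymm _ _
      le_total := hs.total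
      toDecidableLE := Classical.decRel _ }
  let π := Fintype.orderIsoFinOfCardEq α hcard
  refine ⟨π.toEquiv, fun i j hij => ?_⟩
  have hle : π i ≤ π j := hrs _ _ (.single hij)
  have hne : π i ≠ π j := fun h => hr _ (.single (h ▸ hij))
  exact π.lt_iff_lt.mp (lt_of_le_of_ne hle hne)

section Orientation

variable {n : ℕ} {ℍ : Finset (Finset (Fin n))} (A : {H // H ∈ ℍ} → Fin n)

def IsArc (i j : Fin n) : Prop :=
  ∃ H : {H // H ∈ ℍ}, A H = i ∧ j ∈ H.1 ∧ j ≠ i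

variable {A}

theorem exists_hyperedge_chain_of_transGen_isArc {a b : Fin n} (h : TransGen (IsArc A) a b) :
    ∃ (k : ℕ) (Hs : ℕ → {H // H ∈ ℍ}), 1 ≤ k ∧ A (Hs 0) = a ∧
      (∀ t, t + 1 < k → A (Hs (t + 1)) ∈ (Hs t).1 ∧ A (Hs (t + 1)) ≠ A (Hs t)) ∧
      b ∈ (Hs (k - 1)).1 ∧ b ≠ A (Hs (k - 1)) := by
  induction h with
  | single hab =>
    obtain ⟨H, rfl, hb, hne⟩ := hab
    exact ⟨1, fun _ => H, le_rfl, rfl, fun t ht => by omega, hb, hne⟩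
  | tail _ hbc ih =>
    obtain ⟨k, Hs, hk, h0, hchain, hb, hne⟩ := ih
    obtain ⟨H, rfl, hc, hcne⟩ := hbc
    refine ⟨k + 1, Function.update Hs k H, by omega, ?_, fun t ht => ?_, by simpa, by simpa⟩
    · rwa [Function.update_of_ne (by omega)]
    · rw [Function.update_of_ne (by omega : t ≠ k)]
      rcases (Nat.lt_succ_iff.mp ht).lt_or_eq with ht | ht
      · rw [Function.update_of_ne (by omega : t + 1 ≠ k)]
        exact hchain t ht
      · obtain rfl : t = k - 1 := by omega
        rw [ht, Function.update_self]
        exact ⟨hb, hne⟩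

theorem IsAcyclic.not_transGen_isArc (hA : IsAcyclic A) (a : Fin n) :
    ¬ TransGen (IsArc A) a a := by
  intro h
  obtain ⟨k, Hs, hk, rfl, hchain, ha, hne⟩ := exists_hyperedge_chain_of_transGen_isArc h
  rcases hk.eq_or_lt with rfl | hk
  · exact hne rfl
  · exact hA ⟨k, Hs, hk, hchain, ha, hne⟩

end Orientation

theorem Opi_eq_of_forall_le {n : ℕ} [NeZero n] {π : Equiv.Perm (Fin n)} {H : Finset (Fin n)}
    {a : Fin n} (ha : a ∈ H) (hfirst : ∀ k, π k ∈ H → π.symm a ≤ k) : Opi π H = a := by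
  have hmem : π.symm a ∈ Finset.univ.filter (π · ∈ H) := by simpa using ha
  rw [Opi, dif_pos ⟨_, hmem⟩]
  have hmin : (Finset.univ.filter (π · ∈ H)).min' ⟨_, hmem⟩ = π.symm a :=
    le_antisymm (Finset.min'_le _ _ hmem)
      ((Finset.le_min'_iff _ _).2 fun k hk => hfirst k (by simpa using hk))
  rw [hmin, π.apply_symm_apply]

theorem Opi_surjective_general
    (n : ℕ) [NeZero n] (ℍ : Finset (Finset (Fin n)))
    (A : {H // H ∈ ℍ} → Fin n)
    (hAor : IsOrientation A) (hAac : IsAcyclic A) :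
    ∃ π : Equiv.Perm (Fin n), ∀ H : {H // H ∈ ℍ}, Opi π H.1 = A H := by
  obtain ⟨π, hπ⟩ := exists_topologicalSort hAac.not_transGen_isArc (Fintype.card_fin n)
  refine ⟨π, fun H => Opi_eq_of_forall_le (hAor H) fun k hk => ?_⟩
  by_cases hsrc : π k = A H
  · rw [← hsrc, π.symm_apply_apply]
  · have harc : IsArc A (π (π.symm (A H))) (π k) := by
      rw [π.apply_symm_apply]
      exact ⟨H, rfl, hk, hsrc⟩
    exact (hπ _ _ harc).le

/-- Every acyclic orientation `A` of `ℍ` is of the form `O_π` for some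
permutation `π` of `[n]`: the map `π ↦ O_π` is surjective onto acyclic
orientations. -/
theorem Opi_surjective
    (n : ℕ) [NeZero n] (ℍ : Finset (Finset (Fin n))) (hℍ : IsHypergraph n ℍ)
    (A : {H // H ∈ ℍ} → Fin n)
    (hAor : IsOrientation A) (hAac : IsAcyclic A) :
    ∃ π : Equiv.Perm (Fin n), ∀ H : {H // H ∈ ℍ}, Opi π H.1 = A H :=
  Opi_surjective_general n ℍ A hAor hAac
end

section
/- Let ℍ be a hypergraph on [n]. The reflexive–transitive closure of the increasing flip relation on acyclic orientations of ℍ is antisymmetric; equivalently, there is no sequence A = A_0, A_1, …, A_k = A with k ≥ 1 of acyclic orientations of ℍ in which consecutive orientations are related by an increasing flip. Consequently the hypergraphic poset P_ℍ is a partial order. -/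
/-- Weight of an orientation. -/
def flipWeight {n : ℕ} {ℍ : Finset (Finset (Fin n))}
    (A : {H // H ∈ ℍ} → Fin n) : ℕ :=
  ∑ H : {H // H ∈ ℍ}, (A H).val

lemma flipWeight_lt {n : ℕ} {ℍ : Finset (Finset (Fin n))}
    {A B : {H // H ∈ ℍ} → Fin n} {i j : Fin n} (h : IsFlip A B i j) :
    flipWeight A < flipWeight B := by
  obtain ⟨hij, hne, hH⟩ := h
  obtain ⟨H₀, hH₀⟩ := Function.ne_iff.mp hne
  refine Finset.sum_lt_sum (fun H _ => ?_) ⟨H₀, Finset.mem_univ _, ?_⟩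
  · 
    by_cases hc : A H = B H
    · rw [hc]
    · obtain ⟨hA, hB⟩ := (hH H).1 hc
      rw [hA, hB]
      exact le_of_lt hij
  · obtain ⟨hA, hB⟩ := (hH H₀).1 hH₀
    rw [hA, hB]
    exact hij

lemma flipWeight_le_of_rtg {n : ℕ} {ℍ : Finset (Finset (Fin n))}
    {A B : {H // H ∈ ℍ} → Fin n}
    (h : Relation.ReflTransGen (FlipStep (ℍ := ℍ)) A B) :
    A = B ∨ flipWeight A < flipWeight B := by
  induction h with
  | refl => exact Or.inl rfl
  | tail _ hbc ih =>
    obtain ⟨_, _, _, _, i, j, hflip⟩ := hbc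
    rcases ih with rfl | hlt
    · exact Or.inr (flipWeight_lt hflip)
    · exact Or.inr (lt_trans hlt (flipWeight_lt hflip))

/-- The reflexive–transitive closure of the increasing flip relation on acyclic
orientations of `ℍ` is antisymmetric; equivalently, there is no cyclic sequence
`A = A_0, A_1, …, A_k = A` with `k ≥ 1` of acyclic orientations in which
consecutive orientations are related by an increasing flip. Hence the
hypergraphic poset `P_ℍ` is a partial order. -/

theorem flip_order_antisymm
    (n : ℕ) (hn : 1 ≤ n) (ℍ : Finset (Finset (Fin n))) (hℍ : IsHypergraph n ℍ) :
    (∀ A B : {H // H ∈ ℍ} → Fin n,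
        Relation.ReflTransGen (FlipStep (ℍ := ℍ)) A B →
        Relation.ReflTransGen (FlipStep (ℍ := ℍ)) B A → A = B) ∧
      ¬ ∃ (k : ℕ) (As : ℕ → ({H // H ∈ ℍ} → Fin n)), 1 ≤ k ∧ As k = As 0 ∧
          (∀ t ≤ k, IsOrientation (As t) ∧ IsAcyclic (As t)) ∧
          ∀ t < k, ∃ i j : Fin n, IsFlip (As t) (As (t + 1)) i j := by
  constructor
  · intro A B hAB hBA
    rcases flipWeight_le_of_rtg hAB with rfl | h1
    · rfl
    rcases flipWeight_le_of_rtg hBA with rfl | h2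
    · rfl
    exact absurd (lt_trans h1 h2) (lt_irrefl _)
  · rintro ⟨k, As, hk, hcyc, _, hflips⟩
    have key : ∀ t ≤ k, flipWeight (As 0) + t ≤ flipWeight (As t) := by
      intro t
      induction t with
      | zero => intro _; simp
      | succ m ih =>
        intro hm
        have h1 := ih (le_of_lt (Nat.lt_of_succ_le hm))
        obtain ⟨i, j, hflip⟩ := hflips m (Nat.lt_of_succ_le hm)
        have := flipWeight_lt hflip
        omega
    have := key k le_rfl
    rw [hcyc] at this
    omega
end
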